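/- (Equivalence of reality conditions C1 and C2 for unitary monodromy) Let M₁,...,M_N be matrices in U(2) with M_N··· M₁ = I₂. Then the following are equivalent: (C1') there exists an invertible C ∈ GL₂(ℂ) such that for every j, (JC)⁻¹·M_j·(JC) = det(M_j)·(M_j···M₁)⁻¹·M_j⁻¹·(M_j···M₁), where J = ![![0,-1],![1,0]]; (C2) there exist invertible matrices D₁,...,D_N with M_j = D_j·D_{j-1}⁻¹ for all j (indices mod N) and (1/det D₁)·D₁² = ··· = (1/det D_N)·D_N². -/
import Mathlib
open Matrix

private abbrev Mat2 := Matrix (Fin 2) (Fin 2) ℂ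

private lemma JJinv : (!![0, -1; 1, 0] : Mat2) * !![0, 1; -1, 0] = 1 := by
  norm_num [Matrix.mul_fin_two]
  exact Matrix.one_fin_two.symm

private lemma JinvJ : (!![0, 1; -1, 0] : Mat2) * !![0, -1; 1, 0] = 1 := by
  norm_num [Matrix.mul_fin_two]
  exact Matrix.one_fin_two.symm

private lemma rcConjMul {A : Mat2} (hA : IsUnit A.det) (X Y : Mat2) :
    A⁻¹ * (X * Y) * A = (A⁻¹ * X * A) * (A⁻¹ * Y * A) := by
  simp only [Matrix.mul_assoc, Matrix.mul_nonsing_inv_cancel_left _ _ hA]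

private lemma rcConjOfRel {A P : Mat2} (hA : IsUnit A.det) (hP : IsUnit P.det)
    (h : P * A * P = P.det • A) :
    A⁻¹ * P * A = P.det • P⁻¹ ∧ A⁻¹ * P⁻¹ * A = (P.det)⁻¹ • P := by
  have hPne : P.det ≠ 0 := hP.ne_zero
  constructor
  · have key : A⁻¹ * (P * A * P) * P⁻¹ = A⁻¹ * P * A := by
      simp only [← Matrix.mul_assoc]
      rw [Matrix.mul_nonsing_inv_cancel_right _ _ hP]
    rw [h] at key
    rw [← key, mul_smul_comm, smul_mul_assoc, Matrix.nonsing_inv_mul _ hA, Matrix.one_mul]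
  · have h2 : A * P = P.det • (P⁻¹ * A) := by
      have h3 := Matrix.nonsing_inv_mul_cancel_left P (A * P) hP
      rw [show P * (A * P) = P * A * P from (Matrix.mul_assoc P A P).symm, h,
        mul_smul_comm] at h3
      exact h3.symm
    have h4 : P⁻¹ * A = (P.det)⁻¹ • (A * P) := by
      rw [h2, smul_smul, inv_mul_cancel₀ hPne, one_smul]
    rw [Matrix.mul_assoc, h4, mul_smul_comm, ← Matrix.mul_assoc,
      Matrix.nonsing_inv_mul _ hA, Matrix.one_mul]

private lemma rcRelOfConj {A P : Mat2} (hA : IsUnit A.det) (hP : IsUnit P.det)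
    (h : A⁻¹ * P * A = P.det • P⁻¹) : P * A * P = P.det • A := by
  have h2 : A * (A⁻¹ * P * A) = P * A := by
    simp only [← Matrix.mul_assoc]
    rw [Matrix.mul_nonsing_inv _ hA, Matrix.one_mul]
  rw [h] at h2
  rw [← h2, mul_smul_comm, smul_mul_assoc, Matrix.mul_assoc,
    Matrix.nonsing_inv_mul _ hP, Matrix.mul_one]

/-- The ordered product `M j * M (j-1) * ⋯ * M 0`. -/
noncomputable def prodDesc (M : ℕ → Matrix (Fin 2) (Fin 2) ℂ) : ℕ → Matrix (Fin 2) (Fin 2) ℂ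
  | 0 => M 0
  | j + 1 => M (j + 1) * prodDesc M j

/-- Equivalence of the reality conditions C1' and C2 for unitary monodromy. -/
theorem reality_conditions_C1'_iff_C2 (N : ℕ) (hN : 1 ≤ N)
    (M : ℕ → Matrix (Fin 2) (Fin 2) ℂ)
    (hU : ∀ j < N, M j * (M j)ᴴ = 1)
    (hprod : prodDesc M (N - 1) = 1) :
    (∃ C : Matrix (Fin 2) (Fin 2) ℂ, IsUnit C ∧ ∀ j < N,
        ((!![0, -1; 1, 0] : Matrix (Fin 2) (Fin 2) ℂ) * C)⁻¹ * M j
            * (!![0, -1; 1, 0] * C)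
          = (M j).det • ((prodDesc M j)⁻¹ * (M j)⁻¹ * prodDesc M j)) ↔
    (∃ D : ℕ → Matrix (Fin 2) (Fin 2) ℂ,
        (∀ j < N, IsUnit (D j)) ∧
        (∀ j < N, M j = D j * (D ((j + N - 1) % N))⁻¹) ∧
        (∀ j < N, ∀ k < N, ((D j).det)⁻¹ • (D j ^ 2) = ((D k).det)⁻¹ • (D k ^ 2))) := by
  have hN1 : N - 1 < N := by omega
  have hidx0 : (0 + N - 1) % N = N - 1 := by
    rw [Nat.zero_add, Nat.mod_eq_of_lt hN1]
  have hidxS : ∀ k, k < N → (k + 1 + N - 1) % N = k := by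
    intro k hk
    have : k + 1 + N - 1 = k + N := by omega
    rw [this, Nat.add_mod_right, Nat.mod_eq_of_lt hk]
  have hMd : ∀ j, j < N → IsUnit (M j).det := fun j hj =>
    Matrix.isUnit_det_of_right_inverse (hU j hj)
  have hMu : ∀ j, j < N → IsUnit (M j) := fun j hj =>
    (Matrix.isUnit_iff_isUnit_det _).mpr (hMd j hj)
  have hPu : ∀ j, j < N → IsUnit (prodDesc M j) := by
    intro j
    induction j with
    | zero => intro h; exact hMu 0 h
    | succ k ih =>
        intro h
        exact ((hMu _ h).mul (ih (Nat.lt_of_succ_lt h)))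
  have hPd : ∀ j, j < N → IsUnit (prodDesc M j).det := fun j hj =>
    (Matrix.isUnit_iff_isUnit_det _).mp (hPu j hj)
  have hPdS : ∀ k, (prodDesc M (k+1)).det = (M (k+1)).det * (prodDesc M k).det := by
    intro k
    show (M (k+1) * prodDesc M k).det = _
    rw [Matrix.det_mul]
  constructor
  · rintro ⟨C, hCu, hC1⟩
    set A : Mat2 := !![0, -1; 1, 0] * C with hAdef
    have hAu : IsUnit A := ((Matrix.isUnit_iff_isUnit_det _).mpr (Matrix.isUnit_det_of_right_inverse JJinv)).mul hCu
    have hAd : IsUnit A.det := (Matrix.isUnit_iff_isUnit_det _).mp hAu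
    -- conjugation of the partial products
    have hφP : ∀ j, j < N →
        A⁻¹ * prodDesc M j * A = (prodDesc M j).det • (prodDesc M j)⁻¹ := by
      intro j
      induction j with
      | zero =>
          intro h
          have h0 := hC1 0 h
          rw [show prodDesc M 0 = M 0 from rfl] at h0 ⊢
          rw [Matrix.nonsing_inv_mul_cancel_right _ _ (hMd 0 h)] at h0
          exact h0
      | succ k ih =>
          intro h
          have hk : k < N := Nat.lt_of_succ_lt h
          have hstep : prodDesc M (k+1) = M (k+1) * prodDesc M k := rfl
          have h1 := hC1 (k+1) h
          have h2 := ih hk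
          have h3 : A⁻¹ * prodDesc M (k+1) * A
              = (A⁻¹ * M (k+1) * A) * (A⁻¹ * prodDesc M k * A) := by
            rw [hstep]; exact rcConjMul hAd _ _
          rw [h1, h2, smul_mul_assoc, mul_smul_comm, smul_smul] at h3
          have h5 : (M (k+1))⁻¹ * prodDesc M (k+1) = prodDesc M k := by
            rw [hstep]
            exact Matrix.nonsing_inv_mul_cancel_left _ _ (hMd _ h)
          have hXP : (prodDesc M (k+1))⁻¹ * (M (k+1))⁻¹ * prodDesc M (k+1)
              * (prodDesc M k)⁻¹ = (prodDesc M (k+1))⁻¹ := by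
            rw [Matrix.mul_assoc ((prodDesc M (k+1))⁻¹) ((M (k+1))⁻¹) (prodDesc M (k+1)),
              h5, Matrix.mul_nonsing_inv_cancel_right _ _ (hPd k hk)]
          rw [hXP] at h3
          rw [h3, hPdS k]
    have hrel : ∀ j, j < N →
        prodDesc M j * A * prodDesc M j = (prodDesc M j).det • A := fun j hj =>
      rcRelOfConj hAd (hPd j hj) (hφP j hj)
    refine ⟨fun j => prodDesc M j * A, fun j hj => (hPu j hj).mul hAu, ?_, ?_⟩
    · intro j hj
      match j with
      | 0 =>
          show M 0 = prodDesc M 0 * A * (prodDesc M ((0 + N - 1) % N) * A)⁻¹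
          rw [hidx0, hprod, Matrix.one_mul]
          rw [Matrix.mul_nonsing_inv_cancel_right _ _ hAd]
          rfl
      | (k+1) =>
          have hk : k < N := Nat.lt_of_succ_lt hj
          show M (k+1) = prodDesc M (k+1) * A * (prodDesc M ((k + 1 + N - 1) % N) * A)⁻¹
          rw [hidxS k hk]
          rw [show prodDesc M (k+1) = M (k+1) * prodDesc M k from rfl,
            Matrix.mul_inv_rev]
          simp only [← Matrix.mul_assoc]
          rw [Matrix.mul_nonsing_inv_cancel_right _ _ hAd,
            Matrix.mul_nonsing_inv_cancel_right _ _ (hPd k hk)]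
    · have hcomm : ∀ j, j < N →
          ((prodDesc M j * A).det)⁻¹ • ((prodDesc M j * A) ^ 2) = (A.det)⁻¹ • (A ^ 2) := by
        intro j hj
        have h1 : (prodDesc M j * A) ^ 2 = (prodDesc M j).det • (A ^ 2) := by
          rw [sq, sq]
          calc prodDesc M j * A * (prodDesc M j * A)
              = prodDesc M j * A * prodDesc M j * A :=
                (Matrix.mul_assoc (prodDesc M j * A) (prodDesc M j) A).symm
            _ = ((prodDesc M j).det • A) * A := by rw [hrel j hj]
            _ = (prodDesc M j).det • (A * A) := by rw [smul_mul_assoc]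
        rw [h1, Matrix.det_mul, smul_smul, mul_inv,
          show ((prodDesc M j).det)⁻¹ * (A.det)⁻¹ * (prodDesc M j).det
            = ((prodDesc M j).det * ((prodDesc M j).det)⁻¹) * (A.det)⁻¹ from by ring,
          mul_inv_cancel₀ (hPd j hj).ne_zero, one_mul]
      intro j hj k hk
      show ((prodDesc M j * A).det)⁻¹ • ((prodDesc M j * A) ^ 2)
          = ((prodDesc M k * A).det)⁻¹ • ((prodDesc M k * A) ^ 2)
      rw [hcomm j hj, hcomm k hk]
  · rintro ⟨D, hDu, hDrel, hDsc⟩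
    set A : Mat2 := D (N - 1) with hAdef
    have hAu : IsUnit A := hDu (N-1) hN1
    have hAd : IsUnit A.det := (Matrix.isUnit_iff_isUnit_det _).mp hAu
    refine ⟨!![0, 1; -1, 0] * A, ((Matrix.isUnit_iff_isUnit_det _).mpr (Matrix.isUnit_det_of_right_inverse JinvJ)).mul hAu, ?_⟩
    have hJC : (!![0, -1; 1, 0] : Mat2) * (!![0, 1; -1, 0] * A) = A := by
      rw [← Matrix.mul_assoc, JJinv, Matrix.one_mul]
    have hDP : ∀ j, j < N → D j = prodDesc M j * A := by
      intro j
      induction j with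
      | zero =>
          intro h
          have h0 := hDrel 0 h
          rw [hidx0] at h0
          show D 0 = M 0 * A
          rw [h0, Matrix.nonsing_inv_mul_cancel_right _ _ hAd]
      | succ k ih =>
          intro h
          have hk : k < N := Nat.lt_of_succ_lt h
          have hS := hDrel (k+1) h
          rw [hidxS k hk] at hS
          have hDkd : IsUnit (D k).det := (Matrix.isUnit_iff_isUnit_det _).mp (hDu k hk)
          have : M (k+1) * D k = D (k+1) := by
            rw [hS, Matrix.nonsing_inv_mul_cancel_right _ _ hDkd]
          rw [← this, ih hk]
          show M (k+1) * (prodDesc M k * A) = M (k+1) * prodDesc M k * A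
          rw [Matrix.mul_assoc]
    have hrel : ∀ j, j < N →
        prodDesc M j * A * prodDesc M j = (prodDesc M j).det • A := by
      intro j hj
      have e1 := hDsc j hj (N-1) hN1
      rw [hDP j hj, ← hAdef] at e1
      have hPAdet : (prodDesc M j * A).det = (prodDesc M j).det * A.det := Matrix.det_mul _ _
      have e2 : (prodDesc M j * A) ^ 2 = (prodDesc M j).det • (A ^ 2) := by
        have := congrArg (fun X => ((prodDesc M j * A).det) • X) e1
        simp only [smul_smul] at this
        rw [mul_inv_cancel₀ (by rw [hPAdet]; exact mul_ne_zero (hPd j hj).ne_zero hAd.ne_zero),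
          one_smul, hPAdet,
          show (prodDesc M j).det * A.det * (A.det)⁻¹
            = (prodDesc M j).det * (A.det * (A.det)⁻¹) from mul_assoc _ _ _,
          mul_inv_cancel₀ hAd.ne_zero, mul_one] at this
        exact this
      have e3 : prodDesc M j * A * (prodDesc M j * A) = (prodDesc M j).det • (A * A) := by
        rw [← sq, e2, sq]
      have e4 : prodDesc M j * A * prodDesc M j * A = (prodDesc M j).det • (A * A) := by
        rw [Matrix.mul_assoc (prodDesc M j * A) _ _]; exact e3
      have := congrArg (fun X => X * A⁻¹) e4
      simp only [smul_mul_assoc] at this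
      rw [Matrix.mul_nonsing_inv_cancel_right _ _ hAd,
        Matrix.mul_nonsing_inv_cancel_right _ _ hAd] at this
      exact this
    intro j hj
    rw [hJC]
    have hconj := fun (i : ℕ) (hi : i < N) =>
      rcConjOfRel hAd (hPd i hi) (hrel i hi)
    match j with
    | 0 =>
        have h0 := (hconj 0 hj).1
        show A⁻¹ * M 0 * A = (M 0).det • ((M 0)⁻¹ * (M 0)⁻¹ * M 0)
        rw [Matrix.nonsing_inv_mul_cancel_right _ _ (hMd 0 hj)]
        exact h0
    | (k+1) =>
        have hk : k < N := Nat.lt_of_succ_lt hj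
        have hstep : prodDesc M (k+1) = M (k+1) * prodDesc M k := rfl
        have hM : M (k+1) = prodDesc M (k+1) * (prodDesc M k)⁻¹ := by
          rw [hstep, Matrix.mul_nonsing_inv_cancel_right _ _ (hPd k hk)]
        have h5 : (M (k+1))⁻¹ * prodDesc M (k+1) = prodDesc M k := by
          rw [hstep]
          exact Matrix.nonsing_inv_mul_cancel_left _ _ (hMd _ hj)
        have lhs : A⁻¹ * M (k+1) * A
            = ((M (k+1)).det) • ((prodDesc M (k+1))⁻¹ * prodDesc M k) := by
          conv_lhs => rw [hM]
          rw [rcConjMul hAd, (hconj (k+1) hj).1, (hconj k hk).2,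
            smul_mul_assoc, mul_smul_comm, smul_smul, hPdS k,
            show (M (k+1)).det * (prodDesc M k).det * ((prodDesc M k).det)⁻¹
              = (M (k+1)).det * ((prodDesc M k).det * ((prodDesc M k).det)⁻¹) from mul_assoc _ _ _,
            mul_inv_cancel₀ (hPd k hk).ne_zero, mul_one]
        rw [lhs, Matrix.mul_assoc ((prodDesc M (k+1))⁻¹) ((M (k+1))⁻¹) (prodDesc M (k+1)), h5]
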